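/- arXiv:2102.06672 — 3 statements merged into one kernel-verified Lean document; each statement's English description precedes it below -/
import Mathlib

section
/- Let p be a prime and n a positive integer with p^k exactly dividing n. In the polynomial ring F_p[t], the ideal generated by the elements C(n,i)·t^i for i = 1, …, n equals the ideal generated by t^(p^k). -/
open Polynomial

lemma choose_zmod_key (p : ℕ) [Fact p.Prime] (k s i : ℕ) :
    (((p ^ k * s).choose i : ZMod p)) =
      if p ^ k ∣ i then (s.choose (i / p ^ k) : ZMod p) else 0 := by
  have hm : 0 < p ^ k := pow_pos (Fact.out (p := p.Prime)).pos k
  have h1 : ((X + 1 : (ZMod p)[X]) ^ (p ^ k * s)).coeff i = ((p ^ k * s).choose i : ZMod p) :=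
    coeff_X_add_one_pow _ _ _
  have h2 : (X + 1 : (ZMod p)[X]) ^ (p ^ k * s) = (X ^ p ^ k + 1) ^ s := by
    rw [pow_mul, add_pow_char_pow, one_pow]
  rw [h2] at h1
  rw [← h1, add_pow]
  simp only [one_pow, mul_one, ← pow_mul, finset_sum_coeff, coeff_mul_natCast, coeff_X_pow]
  simp only [ite_mul, zero_mul, one_mul]
  by_cases hdvd : p ^ k ∣ i
  · set j0 := i / p ^ k with hj0
    have hi : i = p ^ k * j0 := (Nat.mul_div_cancel' hdvd).symm
    have hcong : ∀ j ∈ Finset.range (s + 1),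
        (if i = p ^ k * j then ((s.choose j : ZMod p)) else 0)
          = if j = j0 then ((s.choose j : ZMod p)) else 0 := by
      intro j _
      congr 1
      rw [hi, eq_iff_iff]
      constructor
      · intro h; exact (Nat.eq_of_mul_eq_mul_left hm h).symm
      · intro h; rw [h]
    rw [Finset.sum_congr rfl hcong, Finset.sum_ite_eq' (Finset.range (s + 1)) j0]
    rw [if_pos hdvd]
    by_cases hle : j0 ∈ Finset.range (s + 1)
    · rw [if_pos hle]
    · rw [if_neg hle]
      rw [Finset.mem_range, Nat.lt_succ_iff, not_le] at hle
      rw [Nat.choose_eq_zero_of_lt hle, Nat.cast_zero]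
  · rw [if_neg hdvd]
    apply Finset.sum_eq_zero
    intro j _
    rw [if_neg]
    intro h
    exact hdvd ⟨j, h⟩

theorem stmt_2 (p n k : ℕ) (hp : Fact p.Prime) (hn : 0 < n)
    (h1 : p ^ k ∣ n) (h2 : ¬ p ^ (k + 1) ∣ n) :
    Ideal.span ((fun i : ℕ => (n.choose i : Polynomial (ZMod p)) * X ^ i) '' Set.Icc 1 n)
      = Ideal.span {(X : Polynomial (ZMod p)) ^ (p ^ k)} := by
  have hppos := hp.out.pos
  have hm : 0 < p ^ k := pow_pos hppos k
  set s := n / p ^ k with hs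
  have hns : n = p ^ k * s := (Nat.mul_div_cancel' h1).symm
  have hps : ¬ p ∣ s := by
    intro hd
    apply h2
    rw [pow_succ, hns]
    exact mul_dvd_mul dvd_rfl hd
  -- key coefficient facts
  have keyA : ∀ i : ℕ, 0 < i → i < p ^ k → ((n.choose i : ZMod p)) = 0 := by
    intro i hi hilt
    rw [hns, choose_zmod_key, if_neg]
    intro hd
    exact absurd (Nat.le_of_dvd hi hd) (not_le.mpr hilt)
  have keyB : ((n.choose (p ^ k) : ZMod p)) ≠ 0 := by
    rw [hns, choose_zmod_key, if_pos dvd_rfl, Nat.div_self hm, Nat.choose_one_right]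
    rw [Ne, ZMod.natCast_eq_zero_iff]
    exact hps
  have hpkn : p ^ k ≤ n := Nat.le_of_dvd hn h1
  apply le_antisymm
  · rw [Ideal.span_le]
    rintro f ⟨i, hi, rfl⟩
    simp only [Set.mem_Icc] at hi
    rcases lt_or_ge i (p ^ k) with hlt | hge
    · show (n.choose i : Polynomial (ZMod p)) * X ^ i ∈ _
      rw [← Polynomial.C_eq_natCast, keyA i hi.1 hlt, map_zero, zero_mul]
      exact (Ideal.span _).zero_mem
    · show (n.choose i : Polynomial (ZMod p)) * X ^ i ∈ _
      rw [SetLike.mem_coe, Ideal.mem_span_singleton]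
      exact Dvd.dvd.mul_left (pow_dvd_pow X hge) _
  · rw [Ideal.span_le, Set.singleton_subset_iff, SetLike.mem_coe]
    have hmem : ((n.choose (p ^ k) : Polynomial (ZMod p)) * X ^ (p ^ k)) ∈
        Ideal.span ((fun i : ℕ => (n.choose i : Polynomial (ZMod p)) * X ^ i) '' Set.Icc 1 n) := by
      apply Ideal.subset_span
      exact ⟨p ^ k, Set.mem_Icc.mpr ⟨hm, hpkn⟩, rfl⟩
    have : (X : Polynomial (ZMod p)) ^ (p ^ k) =
        C ((n.choose (p ^ k) : ZMod p)⁻¹) *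
          ((n.choose (p ^ k) : Polynomial (ZMod p)) * X ^ (p ^ k)) := by
      rw [← mul_assoc, ← Polynomial.C_eq_natCast, ← C_mul, inv_mul_cancel₀ keyB, C_1, one_mul]
    rw [this]
    exact Ideal.mul_mem_left _ _ hmem
end

section
/- Let p be a prime and n a positive integer with p^k exactly dividing n. The quotient ring F_p[t]/⟨C(n,i)·t^i : i = 1,…,n⟩ is isomorphic as an F_p-algebra to F_p[t]/⟨t^(p^k)⟩. -/
/-!
Write `n = p ^ k * m` with `p ∤ m`. In characteristic `p`, `(X + 1) ^ n = (X ^ (p ^ k) + 1) ^ m`,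
so `C(n, i)` vanishes unless `p ^ k ∣ i`, while `C(n, p ^ k) = m` is a unit. Hence every generator
`C(n, i) X ^ i` is a multiple of `X ^ (p ^ k)`, and `X ^ (p ^ k)` is itself a unit multiple of a
generator: the two ideals coincide.
-/

open Polynomial

section ExpChar

variable {R : Type*} [CommRing R] (p : ℕ) [ExpChar R p]

theorem X_add_one_pow_expChar_pow_mul (k m : ℕ) :
    (X + 1 : R[X]) ^ (p ^ k * m) = expand R (p ^ k) ((X + 1) ^ m) := by
  rw [pow_mul, add_pow_expChar_pow, one_pow, map_pow, map_add, expand_X, map_one]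

theorem cast_choose_expChar_pow_mul (k m i : ℕ) :
    ((p ^ k * m).choose i : R) = if p ^ k ∣ i then (m.choose (i / p ^ k) : R) else 0 := by
  simpa only [coeff_X_add_one_pow, coeff_expand (expChar_pow_pos R p k)] using
    congrArg (coeff · i) (X_add_one_pow_expChar_pow_mul (R := R) p k m)

theorem span_choose_mul_X_pow_eq_span_X_pow_expChar_pow [Nontrivial R] {k m : ℕ}
    (hm : IsUnit (m : R)) :
    Ideal.span ((fun i : ℕ => ((p ^ k * m).choose i : R[X]) * X ^ i) '' Set.Icc 1 (p ^ k * m))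
      = Ideal.span {X ^ p ^ k} := by
  apply le_antisymm
  · rw [Ideal.span_le]
    rintro _ ⟨i, hi, rfl⟩
    dsimp only
    rw [SetLike.mem_coe, Ideal.mem_span_singleton, ← C_eq_natCast, cast_choose_expChar_pow_mul]
    split_ifs with hdvd
    · exact (pow_dvd_pow X (Nat.le_of_dvd hi.1 hdvd)).mul_left _
    · simp
  · have hq := expChar_pow_pos R p k
    have hm0 : m ≠ 0 := by rintro rfl; simp at hm
    rw [Ideal.span_singleton_le_iff_mem, ← Ideal.unit_mul_mem_iff_mem _ (isUnit_C.mpr hm)]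
    refine Ideal.subset_span ⟨p ^ k, ⟨hq, Nat.le_mul_of_pos_right _ (Nat.pos_of_ne_zero hm0)⟩, ?_⟩
    dsimp only
    rw [← C_eq_natCast, cast_choose_expChar_pow_mul, if_pos dvd_rfl, Nat.div_self hq,
      Nat.choose_one_right]

end ExpChar

theorem stmt_3_general (p n k : ℕ) (hp : Fact p.Prime)
    (h1 : p ^ k ∣ n) (h2 : ¬ p ^ (k + 1) ∣ n) :
    Nonempty
      ((Polynomial (ZMod p) ⧸
          Ideal.span ((fun i : ℕ => (n.choose i : Polynomial (ZMod p)) * X ^ i) '' Set.Icc 1 n))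
        ≃ₐ[ZMod p]
       (Polynomial (ZMod p) ⧸ Ideal.span {(X : Polynomial (ZMod p)) ^ (p ^ k)})) := by
  obtain ⟨m, rfl⟩ := h1
  have hm : ¬ p ∣ m := fun hpm => h2 (pow_succ p k ▸ mul_dvd_mul_left _ hpm)
  have hmunit : IsUnit (m : ZMod p) := by
    rwa [isUnit_iff_ne_zero, Ne, ZMod.natCast_eq_zero_iff]
  exact ⟨Ideal.quotientEquivAlgOfEq (ZMod p)
    (span_choose_mul_X_pow_eq_span_X_pow_expChar_pow p hmunit)⟩

theorem stmt_3 (p n k : ℕ) (hp : Fact p.Prime) (hn : 0 < n)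
    (h1 : p ^ k ∣ n) (h2 : ¬ p ^ (k + 1) ∣ n) :
    Nonempty
      ((Polynomial (ZMod p) ⧸
          Ideal.span ((fun i : ℕ => (n.choose i : Polynomial (ZMod p)) * X ^ i) '' Set.Icc 1 n))
        ≃ₐ[ZMod p]
       (Polynomial (ZMod p) ⧸ Ideal.span {(X : Polynomial (ZMod p)) ^ (p ^ k)})) :=
  stmt_3_general p n k hp h1 h2
end

section
/- In the quotient ring ℤ[x₁,…,xₙ] modulo the ideal generated by all symmetric polynomials with zero constant term together with the differences xᵢ − xⱼ (i ≠ j), the common image t of the variables satisfies: the quotient is isomorphic to ℤ[t]/⟨C(n,1)t, C(n,2)t², …, C(n,n)tⁿ⟩. -/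
open MvPolynomial

noncomputable section Stmt4Aux

namespace Stmt4Aux

variable (n : ℕ)

/-- Evaluate all variables at `Polynomial.X`. -/
def phi : MvPolynomial (Fin n) ℤ →ₐ[ℤ] Polynomial ℤ :=
  aeval (fun _ => Polynomial.X)

lemma phi_X (i : Fin n) : phi n (X i) = Polynomial.X := by
  simp [phi]

lemma phi_esymm (k : ℕ) :
    phi n (esymm (Fin n) ℤ k) = (n.choose k : Polynomial ℤ) * Polynomial.X ^ k := by
  rw [esymm, map_sum]
  have h : ∀ s ∈ Finset.powersetCard k (Finset.univ : Finset (Fin n)),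
      phi n (∏ i ∈ s, X i) = Polynomial.X ^ k := by
    intro s hs
    rw [map_prod]
    simp only [phi_X]
    rw [Finset.prod_const, (Finset.mem_powersetCard.mp hs).2]
  rw [Finset.sum_congr rfl h, Finset.sum_const, Finset.card_powersetCard, Finset.card_univ,
    Fintype.card_fin, nsmul_eq_mul]

lemma constantCoeff_esymm (k : ℕ) (hk : 0 < k) :
    constantCoeff (esymm (Fin n) ℤ k) = 0 := by
  rw [esymm, map_sum]
  refine Finset.sum_eq_zero fun s hs => ?_
  rw [map_prod]
  have hcard := (Finset.mem_powersetCard.mp hs).2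
  obtain ⟨i, hi⟩ := Finset.card_pos.mp (hcard ▸ hk)
  exact Finset.prod_eq_zero hi (by simp)

/-- A symmetric polynomial with zero constant term lies in the ideal generated by the
elementary symmetric polynomials `e₁, …, eₙ`. -/
lemma symm_mem (f : MvPolynomial (Fin n) ℤ) (hf : f.IsSymmetric) (h0 : f.coeff 0 = 0) :
    f ∈ Ideal.span (Set.range fun i : Fin n => esymm (Fin n) ℤ ((i : ℕ) + 1)) := by
  obtain ⟨q, hq⟩ := esymmAlgHom_surjective (σ := Fin n) ℤ (n := n) (by simp) ⟨f, hf⟩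
  set g : Fin n → MvPolynomial (Fin n) ℤ := fun i => esymm (Fin n) ℤ ((i : ℕ) + 1) with hg
  have hfq : f = aeval g q := by
    have := congrArg Subtype.val hq
    rw [esymmAlgHom_apply] at this
    exact this.symm
  -- the constant coefficient of q vanishes
  have hq0 : constantCoeff q = 0 := by
    have hcomp : (constantCoeff : MvPolynomial (Fin n) ℤ →+* ℤ).comp
        (aeval g : MvPolynomial (Fin n) ℤ →ₐ[ℤ] _).toRingHom
        = eval (fun i => constantCoeff (g i)) := by
      apply MvPolynomial.ringHom_ext <;> intro x <;> simp
    have hcc := congrArg (fun φ => φ q) hcomp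
    simp only [RingHom.coe_comp, Function.comp_apply, AlgHom.toRingHom_eq_coe,
      RingHom.coe_coe] at hcc
    have hgz : (fun i => constantCoeff (g i)) = fun _ : Fin n => (0 : ℤ) := by
      funext i
      exact constantCoeff_esymm n _ (Nat.succ_pos _)
    rw [hgz] at hcc
    have hz : eval (fun _ : Fin n => (0 : ℤ)) q = constantCoeff q := by
      rw [← MvPolynomial.eval_zero']
    rw [hz] at hcc
    rw [← hcc, ← hfq]
    rwa [constantCoeff_eq]
  -- hence q lies in the ideal generated by the variables
  have hqX : q ∈ Ideal.span (Set.range (X : Fin n → MvPolynomial (Fin n) ℤ)) := by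
    rw [← Set.image_univ, mem_ideal_span_X_image]
    intro m hm
    have hm0 : m ≠ 0 := by
      intro h
      apply mem_support_iff.mp hm
      rw [h, ← constantCoeff_eq, hq0]
    obtain ⟨i, hi⟩ := Finsupp.ne_iff.mp hm0
    exact ⟨i, Set.mem_univ i, by simpa using hi⟩
  -- push through `aeval g`
  have := Ideal.mem_map_of_mem (aeval g : MvPolynomial (Fin n) ℤ →ₐ[ℤ] _).toRingHom hqX
  rw [Ideal.map_span, ← Set.range_comp] at this
  have hr : ((aeval g : MvPolynomial (Fin n) ℤ →ₐ[ℤ] _).toRingHom ∘ X : Fin n → _) = g := by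
    funext i
    simp [Function.comp]
  rw [hr] at this
  rw [hfq]
  exact this

end Stmt4Aux

end Stmt4Aux

open Stmt4Aux in
theorem stmt_4 (n : ℕ) (hn : 0 < n) :
    ∃ e : (MvPolynomial (Fin n) ℤ ⧸
            Ideal.span ({f : MvPolynomial (Fin n) ℤ | f.IsSymmetric ∧ f.coeff 0 = 0} ∪
              {f : MvPolynomial (Fin n) ℤ | ∃ i j : Fin n, i ≠ j ∧ f = X i - X j}))
          ≃+*
          (Polynomial ℤ ⧸
            Ideal.span ((fun i : ℕ => (n.choose i : Polynomial ℤ) * Polynomial.X ^ i) ''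
              Set.Icc 1 n)),
      ∀ i : Fin n,
        e (Ideal.Quotient.mk _ (X i)) = Ideal.Quotient.mk _ Polynomial.X := by
  classical
  set Sgen : Set (MvPolynomial (Fin n) ℤ) :=
    {f : MvPolynomial (Fin n) ℤ | f.IsSymmetric ∧ f.coeff 0 = 0} with hSgen
  set Dgen : Set (MvPolynomial (Fin n) ℤ) :=
    {f : MvPolynomial (Fin n) ℤ | ∃ i j : Fin n, i ≠ j ∧ f = X i - X j} with hDgen
  set I : Ideal (MvPolynomial (Fin n) ℤ) := Ideal.span (Sgen ∪ Dgen) with hI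
  set J : Ideal (Polynomial ℤ) :=
    Ideal.span ((fun i : ℕ => (n.choose i : Polynomial ℤ) * Polynomial.X ^ i) '' Set.Icc 1 n)
    with hJ
  set i₀ : Fin n := ⟨0, hn⟩ with hi₀
  set h : Polynomial ℤ →ₐ[ℤ] MvPolynomial (Fin n) ℤ := Polynomial.aeval (X i₀) with hh
  set ψ : MvPolynomial (Fin n) ℤ →+* Polynomial ℤ ⧸ J :=
    (Ideal.Quotient.mk J).comp (phi n).toRingHom with hψ
  -- the congruence f ≡ h (φ f) modulo the difference ideal (hence modulo I)
  have hcong : ∀ f : MvPolynomial (Fin n) ℤ, f - h (phi n f) ∈ I := by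
    have hext : (Ideal.Quotient.mk I).comp (h.toRingHom.comp (phi n).toRingHom)
        = Ideal.Quotient.mk I := by
      apply MvPolynomial.ringHom_ext
      · intro r; simp [phi, hh]
      · intro i
        simp only [RingHom.coe_comp, Function.comp_apply, AlgHom.toRingHom_eq_coe,
          RingHom.coe_coe, phi_X]
        simp only [hh, Polynomial.aeval_X]
        rw [Ideal.Quotient.mk_eq_mk_iff_sub_mem]
        rcases eq_or_ne i i₀ with rfl | hne
        · simp
        · exact Ideal.subset_span (Or.inr ⟨i₀, i, hne.symm, by ring⟩)
    intro f
    have := congrArg (fun g => g f) hext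
    simp only [RingHom.coe_comp, Function.comp_apply, AlgHom.toRingHom_eq_coe,
      RingHom.coe_coe] at this
    rw [← Ideal.Quotient.mk_eq_mk_iff_sub_mem]
    exact this.symm
  -- the elementary symmetric polynomials lie in I
  have hesymmI : ∀ k ∈ Set.Icc 1 n, esymm (Fin n) ℤ k ∈ I := by
    intro k hk
    refine Ideal.subset_span (Or.inl ⟨esymm_isSymmetric _ ℤ k, ?_⟩)
    have := constantCoeff_esymm n k hk.1
    rwa [constantCoeff_eq] at this
  -- C(n,k) * X i₀ ^ k ∈ I for 1 ≤ k ≤ n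
  have hbinI : ∀ k ∈ Set.Icc 1 n,
      (n.choose k : MvPolynomial (Fin n) ℤ) * X i₀ ^ k ∈ I := by
    intro k hk
    have h1 : esymm (Fin n) ℤ k - h (phi n (esymm (Fin n) ℤ k)) ∈ I := hcong _
    have h2 : h (phi n (esymm (Fin n) ℤ k))
        = (n.choose k : MvPolynomial (Fin n) ℤ) * X i₀ ^ k := by
      rw [phi_esymm]
      simp [hh]
    rw [h2] at h1
    have := I.sub_mem (hesymmI k hk) h1
    simpa using this
  -- ψ kills I
  have hIker : I ≤ RingHom.ker ψ := by
    rw [Ideal.span_le]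
    rintro f (⟨hfs, hf0⟩ | ⟨i, j, hij, rfl⟩)
    · have hmem := symm_mem n f hfs hf0
      have hmap := Ideal.mem_map_of_mem (phi n).toRingHom hmem
      rw [Ideal.map_span, ← Set.range_comp] at hmap
      have hsub : Ideal.span (Set.range ((phi n).toRingHom ∘
          fun i : Fin n => esymm (Fin n) ℤ ((i : ℕ) + 1))) ≤ J := by
        rw [Ideal.span_le]
        rintro _ ⟨i, rfl⟩
        simp only [Function.comp_apply, AlgHom.toRingHom_eq_coe, RingHom.coe_coe, phi_esymm]
        exact Ideal.subset_span ⟨(i : ℕ) + 1, ⟨Nat.succ_le_succ (Nat.zero_le _),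
          Nat.succ_le_of_lt i.2⟩, rfl⟩
      have : phi n f ∈ J := hsub hmap
      simpa [hψ, RingHom.mem_ker, Ideal.Quotient.eq_zero_iff_mem] using this
    · simp [hψ, RingHom.mem_ker, phi_X, Ideal.Quotient.eq_zero_iff_mem]
  -- kernel of ψ is contained in I
  have hkerI : RingHom.ker ψ ≤ I := by
    intro f hf
    have hfJ : phi n f ∈ J := by
      rwa [RingHom.mem_ker, hψ, RingHom.comp_apply, Ideal.Quotient.eq_zero_iff_mem] at hf
    have hhf : h (phi n f) ∈ I := by
      have hmap := Ideal.mem_map_of_mem h.toRingHom hfJ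
      rw [Ideal.map_span] at hmap
      have hsub : Ideal.span (h.toRingHom ''
          ((fun i : ℕ => (n.choose i : Polynomial ℤ) * Polynomial.X ^ i) '' Set.Icc 1 n)) ≤ I := by
        rw [Ideal.span_le]
        rintro _ ⟨_, ⟨k, hk, rfl⟩, rfl⟩
        have : h.toRingHom ((n.choose k : Polynomial ℤ) * Polynomial.X ^ k)
            = (n.choose k : MvPolynomial (Fin n) ℤ) * X i₀ ^ k := by
          simp [hh]
        rw [this]
        exact hbinI k hk
      exact hsub hmap
    have := I.add_mem (hcong f) hhf
    simpa using this
  have hker : I = RingHom.ker ψ := le_antisymm hIker hkerI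
  -- ψ is surjective
  have hsurj : Function.Surjective ψ := by
    intro p
    obtain ⟨q, rfl⟩ := Ideal.Quotient.mk_surjective p
    refine ⟨h q, ?_⟩
    have hretr : phi n (h q) = q := by
      have : (phi n).comp h = AlgHom.id ℤ (Polynomial ℤ) := by
        apply Polynomial.algHom_ext
        simp [phi, hh]
      have := congrArg (fun g => g q) this
      simpa using this
    simp [hψ, hretr]
  refine ⟨(Ideal.quotEquivOfEq hker).trans (RingHom.quotientKerEquivOfSurjective hsurj),
    fun i => ?_⟩
  have h1 : (Ideal.quotEquivOfEq hker) (Ideal.Quotient.mk I (X i))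
      = Ideal.Quotient.mk (RingHom.ker ψ) (X i) := Ideal.quotEquivOfEq_mk _ _
  rw [RingEquiv.trans_apply, h1]
  have h2 : (RingHom.quotientKerEquivOfSurjective hsurj)
      (Ideal.Quotient.mk (RingHom.ker ψ) (X i)) = ψ (X i) := RingHom.kerLift_mk _ _
  rw [h2]
  simp [hψ, phi_X]
end
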